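/- arXiv:1808.03982 — 2 statements merged into one kernel-verified Lean document; each statement's English description precedes it below -/
import Mathlib

section
/- Let G be a group with involution θ (an automorphism of order two), and H_θ = {h ∈ G : hθ(h)⁻¹ ∈ Z(G)}. Then the map μ : H_θ/H^θ → Z(G) given by hH^θ ↦ hθ(h)⁻¹ is a well-defined injective map onto a subset of the center; in particular H_θ/H^θ is abelian. -/
namespace Stmt2

variable {G : Type*} [Group G]

/-- The action of `g` on automorphisms: `(g · θ)(h) = g θ(g⁻¹ h g) g⁻¹`. -/
def conjAct (g : G) (θ : MulAut G) : MulAut G := MulAut.conj g * θ * (MulAut.conj g)⁻¹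

/-- The fixed points `G^θ` of `θ`, as a subgroup. -/
def fixedSub (θ : MulAut G) : Subgroup G where
  carrier := {g | θ g = g}
  one_mem' := map_one θ
  mul_mem' := by
    intro a b ha hb
    simp only [Set.mem_setOf_eq, map_mul] at *
    rw [ha, hb]
  inv_mem' := by
    intro a ha
    simp only [Set.mem_setOf_eq, map_inv] at *
    rw [ha]

/-- The stabilizer `G_θ = {g : g · θ = θ}` of `θ` under the conjugation action. -/
def stabSub (θ : MulAut G) : Subgroup G where
  carrier := {g | conjAct g θ = θ}
  one_mem' := by simp [conjAct]
  mul_mem' := by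
    intro a b ha hb
    simp only [Set.mem_setOf_eq, conjAct, map_mul, mul_inv_rev] at *
    calc MulAut.conj a * MulAut.conj b * θ * ((MulAut.conj b)⁻¹ * (MulAut.conj a)⁻¹)
        = MulAut.conj a * (MulAut.conj b * θ * (MulAut.conj b)⁻¹) * (MulAut.conj a)⁻¹ := by
          group
      _ = θ := by rw [hb]; exact ha
  inv_mem' := by
    intro a ha
    simp only [Set.mem_setOf_eq, conjAct, map_inv, inv_inv] at *
    rw [mul_inv_eq_iff_eq_mul] at ha
    rw [mul_assoc, ← ha, inv_mul_cancel_left]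


/-- The twisted stabilizer `G_θ = {g : g θ(g)⁻¹ ∈ Z(G)}` of `θ`. -/
def stabZ (θ : MulAut G) : Subgroup G where
  carrier := {g | g * (θ g)⁻¹ ∈ Subgroup.center G}
  one_mem' := by
    simp only [Set.mem_setOf_eq, map_one, inv_one, mul_one]
    exact Subgroup.one_mem _
  mul_mem' := by
    intro a b ha hb
    simp only [Set.mem_setOf_eq, map_mul, mul_inv_rev] at *
    have hz := Subgroup.mem_center_iff.mp hb
    have h1 : a * b * ((θ b)⁻¹ * (θ a)⁻¹) = a * (b * (θ b)⁻¹) * (θ a)⁻¹ := by group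
    have h2 : a * (b * (θ b)⁻¹) * (θ a)⁻¹ = (b * (θ b)⁻¹) * (a * (θ a)⁻¹) := by
      calc a * (b * (θ b)⁻¹) * (θ a)⁻¹ = (b * (θ b)⁻¹) * a * (θ a)⁻¹ := by rw [hz a]
        _ = (b * (θ b)⁻¹) * (a * (θ a)⁻¹) := by group
    rw [h1, h2]
    exact Subgroup.mul_mem _ hb ha
  inv_mem' := by
    intro a ha
    simp only [Set.mem_setOf_eq, map_inv, inv_inv] at *
    have hz : (θ a) * a⁻¹ ∈ Subgroup.center G := by
      have h := Subgroup.inv_mem _ ha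
      simpa using h
    have hc := Subgroup.mem_center_iff.mp hz
    have heq : a⁻¹ * θ a = θ a * a⁻¹ := by
      have h3 := hc a⁻¹
      calc a⁻¹ * θ a = a⁻¹ * (θ a * a⁻¹) * a := by group
        _ = (θ a * a⁻¹) * a⁻¹ * a := by rw [h3]
        _ = θ a * a⁻¹ := by group
    rw [heq]
    exact hz


/-- For an involution `θ` of `G`, with `H_θ = {g : g θ(g)⁻¹ ∈ Z(G)}` and
`H^θ = {g : θ(g) = g}`, the fixed points `H^θ` are normal in `H_θ`, and the map
`μ : H_θ/H^θ → Z(G)`, `h H^θ ↦ h θ(h)⁻¹`, is a well-defined injective multiplicative map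
into the center; in particular `H_θ/H^θ` is abelian. -/
theorem mu_injective_into_center (θ : MulAut G) (hθ : θ * θ = 1) :
    ((fixedSub θ).subgroupOf (stabZ θ)).Normal ∧
    ∃ φ : (↥(stabZ θ) ⧸ (fixedSub θ).subgroupOf (stabZ θ)) → ↥(Subgroup.center G),
      Function.Injective φ ∧
      (∀ h : ↥(stabZ θ), (φ (QuotientGroup.mk h) : G) = (h : G) * (θ (h : G))⁻¹) ∧
      (∀ a b : ↥(stabZ θ),
        φ (QuotientGroup.mk (a * b)) = φ (QuotientGroup.mk a) * φ (QuotientGroup.mk b)) := by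
  -- the homomorphism f : stabZ θ →* center G
  let f : ↥(stabZ θ) →* ↥(Subgroup.center G) :=
    { toFun := fun h => ⟨(h : G) * (θ (h : G))⁻¹, h.2⟩
      map_one' := by ext; simp
      map_mul' := by
        intro a b
        ext
        have hb := Subgroup.mem_center_iff.mp b.2
        show (↑(a*b) : G) * (θ ↑(a*b))⁻¹ = (↑a * (θ ↑a)⁻¹) * (↑b * (θ ↑b)⁻¹)
        push_cast
        rw [map_mul, mul_inv_rev]
        calc (a : G) * b * ((θ ↑b)⁻¹ * (θ ↑a)⁻¹)
            = (a : G) * ((b : G) * (θ ↑b)⁻¹) * (θ ↑a)⁻¹ := by group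
          _ = ((b : G) * (θ ↑b)⁻¹) * (a : G) * (θ ↑a)⁻¹ := by rw [hb]
          _ = (↑a * (θ ↑a)⁻¹) * (↑b * (θ ↑b)⁻¹) := by
              rw [mul_assoc]
              exact (hb _).symm }
  have hker : (fixedSub θ).subgroupOf (stabZ θ) = f.ker := by
    ext x
    constructor
    · intro hx
      have hx' : θ (x : G) = (x : G) := hx
      simp only [MonoidHom.mem_ker, f]
      ext
      simp [hx']
    · intro hx
      have : (x : G) * (θ (x : G))⁻¹ = 1 := congrArg Subtype.val hx
      have : θ (x : G) = (x : G) := by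
        have := mul_inv_eq_one.mp this
        exact this.symm
      exact this
  have hnorm : ((fixedSub θ).subgroupOf (stabZ θ)).Normal := hker ▸ f.normal_ker
  refine ⟨hnorm, ?_⟩
  have hlift : ∀ x ∈ (fixedSub θ).subgroupOf (stabZ θ), f x = 1 := by
    intro x hx
    rw [hker] at hx
    exact hx
  refine ⟨QuotientGroup.lift _ f hlift, ?_, ?_, ?_⟩
  · intro a b
    refine QuotientGroup.induction_on a fun a => QuotientGroup.induction_on b fun b h => ?_
    rw [QuotientGroup.eq]
    rw [hker, MonoidHom.mem_ker, map_mul, map_inv]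
    rw [show f a = f b from h]
    simp
  · intro h
    rfl
  · intro a b
    simp [map_mul]

end Stmt2
end

section
/- Let K ⊆ H be subgroups of a group G and θ an involution of G. Consider the map K\H/H^θ → {K-orbits in H·θ}, KhH^θ ↦ K·(h·θ). The fiber over the orbit K·(h·θ) is F_h^K = {Kh'H^θ : K·(h'·θ) = K·(h·θ)}, and it satisfies F_h^K = h·F_1^{h⁻¹Kh} (translation by h of the corresponding fiber at the identity for the conjugate subgroup). -/
namespace Stmt3

variable {G : Type*} [Group G]

/-- The action of `g` on automorphisms: `(g · θ)(h) = g θ(g⁻¹ h g) g⁻¹`. -/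
def conjAct (g : G) (θ : MulAut G) : MulAut G := MulAut.conj g * θ * (MulAut.conj g)⁻¹

/-- The fixed points `G^θ` of `θ`, as a subgroup. -/
def fixedSub (θ : MulAut G) : Subgroup G where
  carrier := {g | θ g = g}
  one_mem' := map_one θ
  mul_mem' := by
    intro a b ha hb
    simp only [Set.mem_setOf_eq, map_mul] at *
    rw [ha, hb]
  inv_mem' := by
    intro a ha
    simp only [Set.mem_setOf_eq, map_inv] at *
    rw [ha]

/-- The stabilizer `G_θ = {g : g · θ = θ}` of `θ` under the conjugation action. -/
def stabSub (θ : MulAut G) : Subgroup G where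
  carrier := {g | conjAct g θ = θ}
  one_mem' := by simp [conjAct]
  mul_mem' := by
    intro a b ha hb
    simp only [Set.mem_setOf_eq, conjAct, map_mul, mul_inv_rev] at *
    calc MulAut.conj a * MulAut.conj b * θ * ((MulAut.conj b)⁻¹ * (MulAut.conj a)⁻¹)
        = MulAut.conj a * (MulAut.conj b * θ * (MulAut.conj b)⁻¹) * (MulAut.conj a)⁻¹ := by
          group
      _ = θ := by rw [hb]; exact ha
  inv_mem' := by
    intro a ha
    simp only [Set.mem_setOf_eq, conjAct, map_inv, inv_inv] at *
    rw [mul_inv_eq_iff_eq_mul] at ha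
    rw [mul_assoc, ← ha, inv_mul_cancel_left]


/-- The `K`-orbit of an automorphism `φ`. -/
def orb (K : Subgroup G) (φ : MulAut G) : Set (MulAut G) :=
  {ψ | ∃ k ∈ K, ψ = conjAct k φ}

lemma conjAct_mul' (a b : G) (θ : MulAut G) :
    conjAct (a * b) θ = conjAct a (conjAct b θ) := by
  simp only [conjAct, map_mul, mul_inv_rev]
  group

lemma conjAct_injective' (a : G) :
    Function.Injective (fun θ : MulAut G => conjAct a θ) := by
  intro x y hxy
  simp only [conjAct] at hxy
  exact mul_left_cancel (mul_right_cancel hxy)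

lemma orb_conjAct' (K : Subgroup G) (a : G) (φ : MulAut G) :
    orb K (conjAct a φ)
      = (fun ψ => conjAct a ψ) '' orb (K.map (MulAut.conj a⁻¹).toMonoidHom) φ := by
  ext ψ
  constructor
  · rintro ⟨k, hk, rfl⟩
    refine ⟨conjAct (a⁻¹ * k * a) φ, ⟨a⁻¹ * k * a, ⟨k, hk, by
      simp [MulAut.conj, mul_assoc]⟩, rfl⟩, ?_⟩
    show conjAct a (conjAct (a⁻¹ * k * a) φ) = _
    rw [← conjAct_mul', ← conjAct_mul']
    congr 1
    group
  · rintro ⟨ψ', ⟨k', ⟨k, hk, rfl⟩, rfl⟩, rfl⟩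
    refine ⟨k, hk, ?_⟩
    show conjAct a (conjAct ((MulAut.conj a⁻¹) k) φ) = _
    rw [← conjAct_mul', ← conjAct_mul']
    congr 1
    simp [MulAut.conj]
    group

/-- For subgroups `K ⊆ H` and an involution `θ`, the fiber
`F_h^K = {h' ∈ H : K·(h'·θ) = K·(h·θ)}` of the map `K\H/H^θ → {K-orbits in H·θ}`
(a union of `(K, H^θ)`-double cosets) is the translate by `h` of the corresponding
fiber at the identity for the conjugate subgroup `h⁻¹Kh`: `F_h^K = h · F_1^{h⁻¹Kh}`. -/
theorem fiber_translate (θ : MulAut G) (hθ : θ * θ = 1)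
    (K H : Subgroup G) (hKH : K ≤ H) (h : G) (hh : h ∈ H) :
    {h' : G | h' ∈ H ∧ orb K (conjAct h' θ) = orb K (conjAct h θ)}
      = (fun x => h * x) ''
        {h' : G | h' ∈ H ∧
          orb (K.map (MulAut.conj h⁻¹).toMonoidHom) (conjAct h' θ)
            = orb (K.map (MulAut.conj h⁻¹).toMonoidHom) θ} := by
  ext h'
  simp only [Set.mem_setOf_eq, Set.mem_image]
  constructor
  · rintro ⟨hH, horb⟩
    refine ⟨h⁻¹ * h', ⟨mul_mem (inv_mem hh) hH, ?_⟩, by group⟩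
    apply Set.image_injective.mpr (conjAct_injective' h)
    rw [← orb_conjAct', ← orb_conjAct', ← conjAct_mul', mul_inv_cancel_left]
    exact horb
  · rintro ⟨x, ⟨hx, horb⟩, rfl⟩
    refine ⟨mul_mem hh hx, ?_⟩
    have := congrArg (Set.image (fun ψ => conjAct h ψ)) horb
    rw [← orb_conjAct', ← orb_conjAct', ← conjAct_mul'] at this
    simpa using this

end Stmt3
end
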